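/- Subject reduction (type preservation): if a system S₁ is well typed in the empty environment (⊢ S₁) and S₁ reduces to S₂ in one step (S₁ ⟶ S₂), then ⊢ S₂. -/
import Mathlib


/-- Simple datatypes. -/
inductive SimpleTy : Type
  | resource | string | decimal | dateTime | integer
  deriving DecidableEq

/-- Types: simple types or property types over simple types. -/
inductive Ty : Type
  | simple (σ : SimpleTy)
  | property (σ : SimpleTy)
  deriving DecidableEq

/-- The subtype relation, generated by integer ≤ decimal, reflexivity,
contravariance of Property, and Property σ ≤ Resource. -/
inductive SubTy : Ty → Ty → Prop
  | intDec : SubTy (.simple .integer) (.simple .decimal)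
  | refl (τ : Ty) : SubTy τ τ
  | contra {σ₁ σ₂ : SimpleTy} :
      SubTy (.simple σ₁) (.simple σ₂) → SubTy (.property σ₂) (.property σ₁)
  | propRes (σ : SimpleTy) : SubTy (.property σ) (.simple .resource)

/-- Terms: variables, URIs, and literals. -/
inductive Term : Type
  | var (x : String)
  | uri (u : String)
  | litStr (s : String)
  | litInt (n : Int)
  | litDec (d : Rat)
  | litDate (d : String)
  deriving DecidableEq

/-- Extend a type environment with a binding x : τ. -/
def upd (Γ : String → Option Ty) (x : String) (τ : Ty) : String → Option Ty :=
  fun y => if y = x then some τ else Γ y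

/-- Typing judgement for terms, parameterised by the partial function `Ont`
assigning types to URIs, and the environment `Γ`. -/
inductive HasTy (Ont : String → Option Ty) (Γ : String → Option Ty) : Term → Ty → Prop
  | var {x : String} {τ₀ τ : Ty} : Γ x = some τ₀ → SubTy τ₀ τ → HasTy Ont Γ (.var x) τ
  | uri {u : String} {τ₀ τ : Ty} : Ont u = some τ₀ → SubTy τ₀ τ → HasTy Ont Γ (.uri u) τ
  | int {n : Int} {σ : SimpleTy} :
      SubTy (.simple .integer) (.simple σ) → HasTy Ont Γ (.litInt n) (.simple σ)
  | dec {d : Rat} : HasTy Ont Γ (.litDec d) (.simple .decimal)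
  | str {s : String} : HasTy Ont Γ (.litStr s) (.simple .string)
  | date {d : String} : HasTy Ont Γ (.litDate d) (.simple .dateTime)

/-- Queries: data patterns (quadruples), boolean filters, conjunction, union. -/
inductive Query : Type
  | quad (g s p o : Term)
  | filterEq (e₁ e₂ : Term)
  | conj (q₁ q₂ : Query)
  | union (q₁ q₂ : Query)

/-- Scripts. -/
inductive Script : Type
  | whereQ (q : Query) (P : Script)
  | fromNamed (t : Term) (P : Script)
  | select (x : String) (τ : Ty) (P : Script)
  | iterate (P : Script)
  | done

/-- Substitution of a term for a variable in a term. -/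
def substTerm (x : String) (t : Term) : Term → Term
  | .var y => if y = x then t else .var y
  | s => s

/-- Substitution in queries. -/
def substQuery (x : String) (t : Term) : Query → Query
  | .quad g s p o =>
      .quad (substTerm x t g) (substTerm x t s) (substTerm x t p) (substTerm x t o)
  | .filterEq a b => .filterEq (substTerm x t a) (substTerm x t b)
  | .conj q₁ q₂ => .conj (substQuery x t q₁) (substQuery x t q₂)
  | .union q₁ q₂ => .union (substQuery x t q₁) (substQuery x t q₂)

/-- Capture-avoiding substitution in scripts (`select` binds its variable). -/
def substScript (x : String) (t : Term) : Script → Script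
  | .whereQ q P => .whereQ (substQuery x t q) (substScript x t P)
  | .fromNamed s P => .fromNamed (substTerm x t s) (substScript x t P)
  | .select y τ P => .select y τ (if y = x then P else substScript x t P)
  | .iterate P => .iterate (substScript x t P)
  | .done => .done

/-- Typing of queries. -/
inductive QueryTy (Ont Γ : String → Option Ty) : Query → Prop
  | quad {g s p o : Term} {σ : SimpleTy} :
      HasTy Ont Γ g (.simple .resource) → HasTy Ont Γ s (.simple .resource) →
      HasTy Ont Γ p (.property σ) → HasTy Ont Γ o (.simple σ) →
      QueryTy Ont Γ (.quad g s p o)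
  | filterEq {a b : Term} {σ : SimpleTy} :
      HasTy Ont Γ a (.simple σ) → HasTy Ont Γ b (.simple σ) →
      QueryTy Ont Γ (.filterEq a b)
  | conj {q₁ q₂ : Query} : QueryTy Ont Γ q₁ → QueryTy Ont Γ q₂ → QueryTy Ont Γ (.conj q₁ q₂)
  | union {q₁ q₂ : Query} : QueryTy Ont Γ q₁ → QueryTy Ont Γ q₂ → QueryTy Ont Γ (.union q₁ q₂)

/-- Typing of scripts. -/
inductive ScriptTy (Ont : String → Option Ty) : (String → Option Ty) → Script → Prop
  | whereQ {Γ q P} : QueryTy Ont Γ q → ScriptTy Ont Γ P → ScriptTy Ont Γ (.whereQ q P)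
  | fromNamed {Γ t P} : HasTy Ont Γ t (.simple .resource) → ScriptTy Ont Γ P →
      ScriptTy Ont Γ (.fromNamed t P)
  | select {Γ x τ P} : ScriptTy Ont (upd Γ x τ) P → ScriptTy Ont Γ (.select x τ P)
  | iterate {Γ P} : ScriptTy Ont Γ P → ScriptTy Ont Γ (.iterate P)
  | done {Γ} : ScriptTy Ont Γ .done

/-- Systems: scripts and named-graph data composed in parallel. -/
inductive System : Type
  | script (P : Script)
  | graph (g : Term) (ts : List (Term × Term × Term))
  | par (S₁ S₂ : System)

/-- Typing of systems (in the empty environment). -/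
inductive SysTy (Ont : String → Option Ty) : System → Prop
  | script {P} : ScriptTy Ont (fun _ => none) P → SysTy Ont (.script P)
  | graph {g ts} : HasTy Ont (fun _ => none) g (.simple .resource) →
      (∀ tr ∈ ts, ∃ σ : SimpleTy,
        HasTy Ont (fun _ => none) tr.1 (.simple .resource) ∧
        HasTy Ont (fun _ => none) tr.2.1 (.property σ) ∧
        HasTy Ont (fun _ => none) tr.2.2 (.simple σ)) →
      SysTy Ont (.graph g ts)
  | par {S₁ S₂} : SysTy Ont S₁ → SysTy Ont S₂ → SysTy Ont (.par S₁ S₂)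

/-- One-step reduction of systems, parameterised by the matching relation `Matches`
between data and queries; rules can be applied in any parallel context. -/
inductive Red (Ont : String → Option Ty) (Matches : System → Query → Prop) :
    System → System → Prop
  | deref {u ts P} : SysTy Ont (.graph (.uri u) ts) →
      Red Ont Matches (.script (.fromNamed (.uri u) P))
        (.par (.script P) (.graph (.uri u) ts))
  | selectR {x τ t P} : HasTy Ont (fun _ => none) t τ →
      Red Ont Matches (.script (.select x τ P)) (.script (substScript x t P))
  | queryR {q P D} : Matches D q →
      Red Ont Matches (.par (.script (.whereQ q P)) D) (.par (.script P) D)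
  | parL {S₁ S₁' S₂} : Red Ont Matches S₁ S₁' →
      Red Ont Matches (.par S₁ S₂) (.par S₁' S₂)
  | parR {S₁ S₂ S₂'} : Red Ont Matches S₂ S₂' →
      Red Ont Matches (.par S₁ S₂) (.par S₁ S₂')


lemma subTy_simple {a : SimpleTy} {τ : Ty} (h : SubTy (.simple a) τ) :
    ∃ b, τ = .simple b := by
  cases h <;> exact ⟨_, rfl⟩

lemma subTy_simple_char {a b : SimpleTy} (h : SubTy (.simple a) (.simple b)) :
    a = b ∨ (a = .integer ∧ b = .decimal) := by
  cases h
  · exact Or.inr ⟨rfl, rfl⟩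
  · exact Or.inl rfl

lemma subTy_trans : ∀ {a b c : Ty}, SubTy a b → SubTy b c → SubTy a c := by
  intro a b c h1 h2
  induction h1 generalizing c with
  | intDec =>
    obtain ⟨b, rfl⟩ := subTy_simple h2
    rcases subTy_simple_char h2 with rfl | ⟨h, rfl⟩
    · exact SubTy.intDec
    · exact SubTy.intDec
  | refl => exact h2
  | contra h ih =>
    cases h2 with
    | refl => exact SubTy.contra h
    | contra h' =>
      rcases subTy_simple_char h' with rfl | ⟨rfl, rfl⟩
      · exact SubTy.contra h
      · rcases subTy_simple_char h with rfl | ⟨h1, h2⟩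
        · exact SubTy.contra SubTy.intDec
        · cases h2
          exact SubTy.contra SubTy.intDec
    | propRes => exact SubTy.propRes _
  | propRes σ =>
    obtain ⟨b, rfl⟩ := subTy_simple h2
    rcases subTy_simple_char h2 with rfl | ⟨h, _⟩
    · exact SubTy.propRes σ
    · cases h

lemma hasTy_sub {Ont Γ : String → Option Ty} {t : Term} {τ τ' : Ty}
    (h : HasTy Ont Γ t τ) (hs : SubTy τ τ') : HasTy Ont Γ t τ' := by
  cases h with
  | var h1 h2 => exact HasTy.var h1 (subTy_trans h2 hs)
  | uri h1 h2 => exact HasTy.uri h1 (subTy_trans h2 hs)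
  | int h1 =>
    obtain ⟨b, rfl⟩ := subTy_simple hs
    exact HasTy.int (subTy_trans h1 hs)
  | dec =>
    obtain ⟨b, rfl⟩ := subTy_simple hs
    rcases subTy_simple_char hs with rfl | ⟨h, _⟩
    · exact HasTy.dec
    · cases h
  | str =>
    obtain ⟨b, rfl⟩ := subTy_simple hs
    rcases subTy_simple_char hs with rfl | ⟨h, _⟩
    · exact HasTy.str
    · cases h
  | date =>
    obtain ⟨b, rfl⟩ := subTy_simple hs
    rcases subTy_simple_char hs with rfl | ⟨h, _⟩
    · exact HasTy.date
    · cases h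

lemma hasTy_weaken {Ont Γ : String → Option Ty} {t : Term} {τ : Ty}
    (h : HasTy Ont (fun _ => none) t τ) : HasTy Ont Γ t τ := by
  cases h with
  | var h1 _ => cases h1
  | uri h1 h2 => exact HasTy.uri h1 h2
  | int h1 => exact HasTy.int h1
  | dec => exact HasTy.dec
  | str => exact HasTy.str
  | date => exact HasTy.date

lemma substTerm_ty {Ont Γ : String → Option Ty} {x : String} {t s : Term} {τ τ' : Ty}
    (ht : HasTy Ont (fun _ => none) t τ) (h : HasTy Ont (upd Γ x τ) s τ') :
    HasTy Ont Γ (substTerm x t s) τ' := by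
  cases h with
  | var h1 h2 =>
    rename_i y _
    simp only [substTerm]
    by_cases hy : y = x
    · simp only [hy, if_pos rfl]
      rw [upd, if_pos hy] at h1
      cases h1
      exact hasTy_sub (hasTy_weaken ht) h2
    · simp only [if_neg hy]
      rw [upd, if_neg hy] at h1
      exact HasTy.var h1 h2
  | uri h1 h2 => exact HasTy.uri h1 h2
  | int h1 => exact HasTy.int h1
  | dec => exact HasTy.dec
  | str => exact HasTy.str
  | date => exact HasTy.date

lemma substQuery_ty {Ont Γ : String → Option Ty} {x : String} {t : Term} {τ : Ty} {q : Query}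
    (ht : HasTy Ont (fun _ => none) t τ) (h : QueryTy Ont (upd Γ x τ) q) :
    QueryTy Ont Γ (substQuery x t q) := by
  induction q with
  | quad g s p o =>
    cases h with
    | quad h1 h2 h3 h4 =>
      exact QueryTy.quad (substTerm_ty ht h1) (substTerm_ty ht h2)
        (substTerm_ty ht h3) (substTerm_ty ht h4)
  | filterEq a b =>
    cases h with
    | filterEq h1 h2 => exact QueryTy.filterEq (substTerm_ty ht h1) (substTerm_ty ht h2)
  | conj q₁ q₂ ih₁ ih₂ =>
    cases h with
    | conj h1 h2 => exact QueryTy.conj (ih₁ h1) (ih₂ h2)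
  | union q₁ q₂ ih₁ ih₂ =>
    cases h with
    | union h1 h2 => exact QueryTy.union (ih₁ h1) (ih₂ h2)

lemma upd_self {Γ : String → Option Ty} {x : String} {τ τ' : Ty} :
    upd (upd Γ x τ) x τ' = upd Γ x τ' := by
  funext z
  simp only [upd]
  by_cases hz : z = x <;> simp [hz]

lemma upd_comm {Γ : String → Option Ty} {x y : String} {τ τ' : Ty} (h : y ≠ x) :
    upd (upd Γ x τ) y τ' = upd (upd Γ y τ') x τ := by
  funext z
  simp only [upd]
  by_cases hz : z = y
  · subst hz; simp [h]
  · simp [hz]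

lemma substScript_ty {Ont : String → Option Ty} {x : String} {t : Term} {τ : Ty} {P : Script}
    (ht : HasTy Ont (fun _ => none) t τ) :
    ∀ {Γ : String → Option Ty}, ScriptTy Ont (upd Γ x τ) P →
    ScriptTy Ont Γ (substScript x t P) := by
  induction P with
  | whereQ q P ih =>
    intro Γ h
    cases h with
    | whereQ h1 h2 => exact ScriptTy.whereQ (substQuery_ty ht h1) (ih h2)
  | fromNamed s P ih =>
    intro Γ h
    cases h with
    | fromNamed h1 h2 => exact ScriptTy.fromNamed (substTerm_ty ht h1) (ih h2)
  | select y τ' P ih =>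
    intro Γ h
    cases h with
    | select h1 =>
      simp only [substScript]
      by_cases hy : y = x
      · simp only [if_pos hy]
        subst hy
        rw [upd_self] at h1
        exact ScriptTy.select h1
      · simp only [if_neg hy]
        rw [upd_comm hy] at h1
        exact ScriptTy.select (ih h1)
  | iterate P ih =>
    intro Γ h
    cases h with
    | iterate h1 => exact ScriptTy.iterate (ih h1)
  | done => intro Γ _; exact ScriptTy.done

theorem subject_reduction (Ont : String → Option Ty)
    (Matches : System → Query → Prop) (S₁ S₂ : System)
    (h₁ : SysTy Ont S₁) (hred : Red Ont Matches S₁ S₂) : SysTy Ont S₂ := by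
  induction hred with
  | deref hg =>
    cases h₁ with
    | script hs =>
      cases hs with
      | fromNamed _ h2 => exact SysTy.par (SysTy.script h2) hg
  | selectR ht =>
    cases h₁ with
    | script hs =>
      cases hs with
      | select h1 => exact SysTy.script (substScript_ty ht h1)
  | queryR _ =>
    cases h₁ with
    | par h1 h2 =>
      cases h1 with
      | script hs =>
        cases hs with
        | whereQ _ hp => exact SysTy.par (SysTy.script hp) h2
  | parL _ ih =>
    cases h₁ with
    | par h1 h2 => exact SysTy.par (ih h1) h2
  | parR _ ih =>
    cases h₁ with
    | par h1 h2 => exact SysTy.par h1 (ih h2)
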